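/- Let σ : ℝ → ℝ be 1-Lipschitz with σ(0) = 0, and let L ≥ 1. Let θ = (W_1,…,W_L) and θ' = (W'_1,…,W'_L) be parameters of two bias-free networks with the same architecture (L, (N_0,…,N_L)), and for ℓ = 1,…,L−1 let θ'_ℓ = (W'_1,…,W'_ℓ) be the truncated network of depth ℓ. Then for every x ∈ ℝ^{N_0}: ‖R_θ(x) − R_{θ'}(x)‖_∞ ≤ Σ_{ℓ=1}^{L} (∏_{k=ℓ+1}^{L} ‖W_k‖_{op,∞}) · ‖W_ℓ − W'_ℓ‖_{op,∞} · ‖R_{θ'_{ℓ−1}}(x)‖_∞, with the conventions R_{θ'_0}(x) = x and ∏_{k=L+1}^{L} ‖W_k‖_{op,∞} = 1. -/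

import Mathlib

/-- The ℓ∞ operator norm of a real matrix: `sup_{‖x‖∞ = 1} ‖Ax‖∞`
(the norm on `n → ℝ` is the sup norm). -/
noncomputable def opNormInf {m n : Type*} [Fintype m] [Fintype n] (A : Matrix m n ℝ) : ℝ :=
  sSup ((fun x : n → ℝ => ‖A.mulVec x‖) '' {x | ‖x‖ = 1})

/-- Realization of a bias-free network: layer `ℓ` (0-indexed) has weight matrix
`W ℓ ∈ ℝ^{N (ℓ+1) × N ℓ}`, the activation `σ` is applied componentwise.
`realize σ N W ℓ x` is the realization of the depth-`ℓ` truncated network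
`θ_ℓ = (W_1, …, W_ℓ)` at `x`; for `ℓ = 0` it equals `x`. -/
noncomputable def realize (σ : ℝ → ℝ) (N : ℕ → ℕ)
    (W : ∀ ℓ : ℕ, Matrix (Fin (N (ℓ + 1))) (Fin (N ℓ)) ℝ) :
    (L : ℕ) → (Fin (N 0) → ℝ) → Fin (N L) → ℝ
  | 0, x => x
  | L + 1, x => fun i => σ ((W L).mulVec (realize σ N W L x) i)

/-!
Writing `r_ℓ`, `r'_ℓ` for the two realizations after `ℓ` layers, the 1-Lipschitz activation and
`W v - W' v' = W (v - v') + (W - W') v'` give the one-layer bound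
`‖r_{ℓ+1} - r'_{ℓ+1}‖ ≤ ‖W_ℓ‖ ‖r_ℓ - r'_ℓ‖ + ‖W_ℓ - W'_ℓ‖ ‖r'_ℓ‖`;
unrolling this linear recursion from `r_0 = r'_0 = x` yields the sum.
-/

open Finset Matrix

section OpNormInf

variable {m n : Type*} [Fintype m] [Fintype n]

lemma opNormInf_nonneg (A : Matrix m n ℝ) : 0 ≤ opNormInf A :=
  Real.sSup_nonneg (by rintro _ ⟨x, -, rfl⟩; exact norm_nonneg _)

open scoped Matrix.Norms.Operator in
lemma norm_mulVec_le_opNormInf_of_norm_eq_one (A : Matrix m n ℝ) {u : n → ℝ} (hu : ‖u‖ = 1) :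
    ‖A *ᵥ u‖ ≤ opNormInf A := by
  refine le_csSup ⟨‖A‖, ?_⟩ ⟨u, hu, rfl⟩
  rintro _ ⟨v, hv, rfl⟩
  exact (linfty_opNorm_mulVec A v).trans_eq (by rw [hv, mul_one])

lemma norm_mulVec_le_opNormInf_mul (A : Matrix m n ℝ) (v : n → ℝ) :
    ‖A *ᵥ v‖ ≤ opNormInf A * ‖v‖ := by
  rcases eq_or_ne v 0 with rfl | hv
  · simp
  have hv' : 0 < ‖v‖ := norm_pos_iff.2 hv
  have hu : ‖‖v‖⁻¹ • v‖ = 1 := by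
    rw [norm_smul, norm_inv, norm_norm, inv_mul_cancel₀ hv'.ne']
  calc ‖A *ᵥ v‖ = ‖A *ᵥ (‖v‖⁻¹ • v)‖ * ‖v‖ := by
        rw [mulVec_smul, norm_smul, norm_inv, norm_norm]
        field_simp
    _ ≤ opNormInf A * ‖v‖ := by
        gcongr
        exact norm_mulVec_le_opNormInf_of_norm_eq_one A hu

lemma norm_mulVec_sub_mulVec_le (A A' : Matrix m n ℝ) (v v' : n → ℝ) :
    ‖A *ᵥ v - A' *ᵥ v'‖ ≤ opNormInf A * ‖v - v'‖ + opNormInf (A - A') * ‖v'‖ :=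
  calc ‖A *ᵥ v - A' *ᵥ v'‖ = ‖A *ᵥ (v - v') + (A - A') *ᵥ v'‖ := by
        rw [mulVec_sub, sub_mulVec, sub_add_sub_cancel]
    _ ≤ opNormInf A * ‖v - v'‖ + opNormInf (A - A') * ‖v'‖ :=
        (norm_add_le _ _).trans
          (add_le_add (norm_mulVec_le_opNormInf_mul _ _) (norm_mulVec_le_opNormInf_mul _ _))

end OpNormInf

lemma norm_comp_sub_comp_le {ι : Type*} [Fintype ι] {σ : ℝ → ℝ} (hσ : LipschitzWith 1 σ)
    (u v : ι → ℝ) : ‖(fun i => σ (u i)) - fun i => σ (v i)‖ ≤ ‖u - v‖ := by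
  refine (pi_norm_le_iff_of_nonneg (norm_nonneg _)).2 fun i => ?_
  calc ‖σ (u i) - σ (v i)‖ ≤ ‖u i - v i‖ := by
        simpa [dist_eq_norm] using hσ.dist_le_mul (u i) (v i)
    _ ≤ ‖u - v‖ := norm_le_pi_norm (u - v) i

lemma le_sum_prod_mul_of_le_mul_add {a b c : ℕ → ℝ} (ha : a 0 ≤ 0) (hc : ∀ n, 0 ≤ c n)
    (hstep : ∀ n, a (n + 1) ≤ c n * a n + b n) (L : ℕ) :
    a L ≤ ∑ ℓ ∈ range L, (∏ k ∈ Ico (ℓ + 1) L, c k) * b ℓ := by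
  induction L with
  | zero => simpa using ha
  | succ L ih =>
    rw [sum_range_succ, Ico_self, prod_empty, one_mul]
    calc a (L + 1) ≤ c L * a L + b L := hstep L
      _ ≤ c L * ∑ ℓ ∈ range L, (∏ k ∈ Ico (ℓ + 1) L, c k) * b ℓ + b L := by
          gcongr
          exact hc L
      _ = _ := by
          rw [mul_sum]
          congr 1
          refine sum_congr rfl fun ℓ hℓ => ?_
          rw [prod_Ico_succ_top (mem_range.1 hℓ)]
          ring

lemma norm_realize_succ_sub_le {σ : ℝ → ℝ} (hσ : LipschitzWith 1 σ) (N : ℕ → ℕ)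
    (W W' : ∀ ℓ : ℕ, Matrix (Fin (N (ℓ + 1))) (Fin (N ℓ)) ℝ) (L : ℕ) (x : Fin (N 0) → ℝ) :
    ‖realize σ N W (L + 1) x - realize σ N W' (L + 1) x‖ ≤
      opNormInf (W L) * ‖realize σ N W L x - realize σ N W' L x‖ +
        opNormInf (W L - W' L) * ‖realize σ N W' L x‖ :=
  (norm_comp_sub_comp_le hσ _ _).trans (norm_mulVec_sub_mulVec_le _ _ _ _)

theorem statement4_general (σ : ℝ → ℝ) (hσ : LipschitzWith 1 σ)
    (L : ℕ) (N : ℕ → ℕ)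
    (W W' : ∀ ℓ : ℕ, Matrix (Fin (N (ℓ + 1))) (Fin (N ℓ)) ℝ)
    (x : Fin (N 0) → ℝ) :
    ‖realize σ N W L x - realize σ N W' L x‖ ≤
      ∑ ℓ ∈ Finset.range L,
        (∏ k ∈ Finset.Ico (ℓ + 1) L, opNormInf (W k)) *
          opNormInf (W ℓ - W' ℓ) *
          ‖realize σ N W' ℓ x‖ := by
  simp_rw [mul_assoc]
  exact le_sum_prod_mul_of_le_mul_add (a := fun n => ‖realize σ N W n x - realize σ N W' n x‖)
    (by simp [realize]) (fun n => opNormInf_nonneg (W n))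
    (fun n => norm_realize_succ_sub_le hσ N W W' n x) L

/-- for a 1-Lipschitz activation `σ` with `σ 0 = 0` and two bias-free networks
with the same architecture (layers indexed `0,…,L-1`; paper layer `ℓ` is index `ℓ-1`),
`‖R_θ(x) - R_{θ'}(x)‖∞ ≤ Σ_{ℓ=1}^L (∏_{k=ℓ+1}^L ‖W_k‖_{op,∞}) ‖W_ℓ - W'_ℓ‖_{op,∞}
‖R_{θ'_{ℓ-1}}(x)‖∞`, with `R_{θ'_0}(x) = x` and empty products equal to `1`. -/
theorem statement4 (σ : ℝ → ℝ) (hσ : LipschitzWith 1 σ) (hσ0 : σ 0 = 0)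
    (L : ℕ) (hL : 1 ≤ L) (N : ℕ → ℕ)
    (W W' : ∀ ℓ : ℕ, Matrix (Fin (N (ℓ + 1))) (Fin (N ℓ)) ℝ)
    (x : Fin (N 0) → ℝ) :
    ‖realize σ N W L x - realize σ N W' L x‖ ≤
      ∑ ℓ ∈ Finset.range L,
        (∏ k ∈ Finset.Ico (ℓ + 1) L, opNormInf (W k)) *
          opNormInf (W ℓ - W' ℓ) *
          ‖realize σ N W' ℓ x‖ :=
  statement4_general σ hσ L N W W' x
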